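/- Let C ⊆ F^m be a 1-code with 0 ∈ C and let Ċ := C \ {0}. Then the cosets R_ι + ẑι + e^(ι), for ι ∈ Ċ, are pairwise disjoint subsets of the Hamming code H, and none of them contains the all-zero word 0^n. -/

import Mathlib

/-- `F^m`: binary words of length `m`, i.e. the vector space `(Fin m → ZMod 2)` over GF(2). -/
abbrev Fm (m : ℕ) := Fin m → ZMod 2

/-- Index set for `F^n` with `n = 2^m - 1`: the nonzero vectors of `F^m`. -/
abbrev Idx (m : ℕ) := {v : Fm m // v ≠ 0}

/-- `F^n`: binary words of length `n = 2^m - 1`, with coordinates indexed by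
nonzero vectors of `F^m`. -/
abbrev Fn (m : ℕ) := Idx m → ZMod 2

/-- The coordinate of `c : F^n` at index `α : F^m` (junk value `0` when `α = 0`,
which is never used since coordinates are only ever accessed at nonzero indices). -/
def coord {m : ℕ} (c : Fn m) (α : Fm m) : ZMod 2 :=
  if h : α = 0 then 0 else c ⟨α, h⟩

/-- `e^(ι)`: the word of `F^n` with `1` in coordinate `ι` and `0` elsewhere. -/
def eWord {m : ℕ} (ι : Idx m) : Fn m := fun κ => if κ = ι then 1 else 0

/-- `ẑα = (α, 0^{n-m})`: the word of `F^n` whose coordinate at index `κ` equals `α i`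
if `κ = π^(i)` is the `i`-th standard basis vector `Pi.single i 1`, and `0` otherwise. -/
def zhat {m : ℕ} (α : Fm m) : Fn m :=
  fun κ => ∑ i : Fin m, if (κ : Fm m) = Pi.single i 1 then α i else 0

/-- The Hamming code `H = {c ∈ F^n : ∑_{ι ≠ 0} c_ι • ι = 0}`. -/
def hammingCode (m : ℕ) : Set (Fn m) :=
  {c | ∑ ι : Idx m, c ι • (ι : Fm m) = 0}

/-- The linear `ι`-component `R_ι = {c ∈ H : c_α = c_{α+ι} ∀ α ∉ {0, ι}}`. -/
def Rcomp {m : ℕ} (ι : Idx m) : Set (Fn m) :=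
  {c | c ∈ hammingCode m ∧
    ∀ α : Fm m, α ≠ 0 → α ≠ (ι : Fm m) → coord c α = coord c (α + ι)}

/-- The coset `M + z = {c + z : c ∈ M}`. -/
def coset {m : ℕ} (M : Set (Fn m)) (z : Fn m) : Set (Fn m) := (fun c => c + z) '' M

/-- The neighborhood `Ω(M)` of `M ⊆ F^n`: all words at Hamming distance at most 1 from `M`. -/
def nbhd {m : ℕ} (M : Set (Fn m)) : Set (Fn m) :=
  {x | ∃ c ∈ M, hammingDist x c ≤ 1}

/-- A `1`-code: any two distinct elements are at Hamming distance at least 3. -/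
def IsOneCode {ι : Type*} [Fintype ι] (C : Set (ι → ZMod 2)) : Prop :=
  ∀ x ∈ C, ∀ y ∈ C, x ≠ y → 3 ≤ hammingDist x y

/-- A `1`-perfect code in `F^n`: a `1`-code whose radius-1 balls cover all of `F^n`. -/
def IsOnePerfect {m : ℕ} (P : Set (Fn m)) : Prop :=
  IsOneCode P ∧ ∀ x : Fn m, ∃ c ∈ P, hammingDist x c ≤ 1

/-- In characteristic 2, the sum of two distinct vectors is nonzero. -/
lemma add_ne_zero_of_ne' {m : ℕ} {ι κ : Fm m} (h : ι ≠ κ) : ι + κ ≠ 0 := by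
  intro h0
  apply h
  funext i
  have h1 := congrFun h0 i
  have key : ∀ a b : ZMod 2, a + b = 0 → a = b := by decide
  exact key _ _ h1

/-! A word `x` lies in `R_ι + z` only if its pair sums `x_β + x_{β+ι}` agree with those of `z`
for `β ∉ {0, ι}`. Nonzero codewords of `C` and sums of two distinct ones have weight at least 3,
so for `z = ẑι + e^(ι)` and a unit vector `π = π^(j)` the pair sum at `π` is `ι_j`, while the
pair sums at `π + w` vanish whenever `w` and `w + ι` have weight at least 3. A common word of the
cosets of `ι ≠ κ` thus gives four relations between `x_π, x_{π+ι}, x_{π+κ}, x_{π+ι+κ}` which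
add up to `ι_j + κ_j = 0`, false for `j` with `ι_j ≠ κ_j`; likewise `x = 0` forces `ι_j = 0` for
all `j`. Finally the syndrome of `ẑι + e^(ι)` is `ι + ι = 0`. -/

open ZModModule

section Weight

variable {n : Type*} [Fintype n]

lemma hammingNorm_add_eq_hammingDist (u v : n → ZMod 2) :
    hammingNorm (u + v) = hammingDist u v := by
  rw [hammingDist_eq_hammingNorm, ZModModule.neg_eq_self]

lemma hammingNorm_single_one [DecidableEq n] (j : n) :
    hammingNorm (Pi.single j 1 : n → ZMod 2) = 1 := by
  simp [hammingNorm, Pi.single_apply, Finset.filter_eq']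

lemma two_le_hammingNorm_single_add [DecidableEq n] {w : n → ZMod 2} (hw : 3 ≤ hammingNorm w)
    (j : n) : 2 ≤ hammingNorm (Pi.single j 1 + w) := by
  have := hammingDist_triangle 0 (Pi.single j 1 : n → ZMod 2) w
  rw [hammingDist_zero_left, hammingNorm_single_one] at this
  rw [hammingNorm_add_eq_hammingDist]
  omega

lemma IsOneCode.three_le_hammingNorm_add {C : Set (n → ZMod 2)} (hC : IsOneCode C)
    {u v : n → ZMod 2} (hu : u ∈ C) (hv : v ∈ C) (huv : u ≠ v) : 3 ≤ hammingNorm (u + v) :=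
  hammingNorm_add_eq_hammingDist u v ▸ hC u hu v hv huv

end Weight

variable {m : ℕ}

def syndrome (m : ℕ) : Fn m →ₗ[ZMod 2] Fm m := Fintype.linearCombination (ZMod 2) Subtype.val

lemma mem_hammingCode_iff {c : Fn m} : c ∈ hammingCode m ↔ syndrome m c = 0 := by
  rw [syndrome, Fintype.linearCombination_apply]; rfl

lemma eWord_eq_single (ι : Idx m) : eWord ι = Pi.single ι 1 := by
  ext κ; simp [eWord, Pi.single_apply]

lemma syndrome_eWord (ι : Idx m) : syndrome m (eWord ι) = ι := by
  rw [eWord_eq_single, syndrome, Fintype.linearCombination_apply_single, one_smul]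

lemma syndrome_zhat (α : Fm m) : syndrome m (zhat α) = α := by
  have hzhat : zhat α = ∑ i, Pi.single ⟨Pi.single i 1, by simp⟩ (α i) := by
    ext κ
    simp [zhat, Pi.single_apply, Finset.sum_apply, Subtype.ext_iff]
  rw [hzhat, map_sum]
  simpa [syndrome, Fintype.linearCombination_apply_single] using (pi_eq_sum_univ' α).symm

lemma coord_zero (β : Fm m) : coord 0 β = 0 := by
  simp [coord]

lemma coord_add (x y : Fn m) (β : Fm m) : coord (x + y) β = coord x β + coord y β := by
  unfold coord
  split_ifs <;> simp

lemma coord_eWord (ι : Idx m) (β : Fm m) : coord (eWord ι) β = if β = ι then 1 else 0 := by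
  unfold coord eWord
  split_ifs <;> simp_all [Subtype.ext_iff, eq_comm, ι.2]

lemma coord_zhat_single (α : Fm m) (j : Fin m) : coord (zhat α) (Pi.single j 1) = α j := by
  have hsingle : ∀ i, i ≠ j → (Pi.single j 1 : Fm m) ≠ Pi.single i 1 := fun i hij h => by
    simpa [hij.symm] using congrFun h j
  rw [coord, dif_neg (by simp), zhat]
  dsimp only
  rw [Finset.sum_eq_single j (fun i _ hij => if_neg (hsingle i hij)) (by simp), if_pos rfl]

lemma coord_zhat_of_two_le_hammingNorm (α : Fm m) {β : Fm m} (hβ : 2 ≤ hammingNorm β) :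
    coord (zhat α) β = 0 := by
  have hβ0 : β ≠ 0 := hammingNorm_pos_iff.mp (by omega)
  rw [coord, dif_neg hβ0]
  refine Finset.sum_eq_zero fun i _ => if_neg fun h => ?_
  have : hammingNorm β = 1 := (show β = _ from h) ▸ hammingNorm_single_one i
  omega

lemma coord_zhat_add_eWord_of_two_le_hammingNorm (α : Fm m) (ι : Idx m) {β : Fm m}
    (hβ : 2 ≤ hammingNorm β) (hβι : β ≠ ι) : coord (zhat α + eWord ι) β = 0 := by
  rw [coord_add, coord_zhat_of_two_le_hammingNorm α hβ, coord_eWord, if_neg hβι, add_zero]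

def pairSum (ι : Fm m) (x : Fn m) (β : Fm m) : ZMod 2 := coord x β + coord x (β + ι)

lemma pairSum_eq_of_mem_coset {ι : Idx m} {z x : Fn m} (hx : x ∈ coset (Rcomp ι) z) {β : Fm m}
    (hβ0 : β ≠ 0) (hβι : β ≠ ι) : pairSum ι x β = pairSum ι z β := by
  obtain ⟨c, hc, rfl⟩ := hx
  rw [pairSum, pairSum, coord_add, coord_add, hc.2 β hβ0 hβι, add_add_add_comm, add_self,
    zero_add]

lemma pairSum_single_of_mem_coset {ι : Idx m} (hι : 3 ≤ hammingNorm (ι : Fm m)) {x : Fn m}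
    (hx : x ∈ coset (Rcomp ι) (zhat ι + eWord ι)) (j : Fin m) :
    pairSum ι x (Pi.single j 1) = (ι : Fm m) j := by
  have hA : hammingNorm (Pi.single j 1 : Fm m) = 1 := hammingNorm_single_one j
  have hA0 : (Pi.single j 1 : Fm m) ≠ 0 := hammingNorm_pos_iff.mp (by omega)
  have hAι : (Pi.single j 1 : Fm m) ≠ ι := ne_of_apply_ne hammingNorm (by omega)
  rw [pairSum_eq_of_mem_coset hx hA0 hAι, pairSum, coord_add, coord_zhat_single, coord_eWord,
    if_neg hAι, coord_zhat_add_eWord_of_two_le_hammingNorm _ _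
      (two_le_hammingNorm_single_add hι j) (mt add_eq_right.mp hA0)]
  simp

lemma pairSum_single_add_of_mem_coset {ι : Idx m} {x : Fn m}
    (hx : x ∈ coset (Rcomp ι) (zhat ι + eWord ι)) {w : Fm m} (hw : 3 ≤ hammingNorm w)
    (hwι : 3 ≤ hammingNorm (w + (ι : Fm m))) (j : Fin m) :
    pairSum ι x (Pi.single j 1 + w) = 0 := by
  have hB := two_le_hammingNorm_single_add hw j
  have hBι : 2 ≤ hammingNorm ((Pi.single j 1 : Fm m) + w + (ι : Fm m)) := by
    rw [add_assoc]; exact two_le_hammingNorm_single_add hwι j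
  have hB0 : (Pi.single j 1 : Fm m) + w ≠ 0 := hammingNorm_pos_iff.mp (by omega)
  have hBneι : (Pi.single j 1 : Fm m) + w ≠ ι := fun h => by
    rw [h, add_self, hammingNorm_zero] at hBι
    omega
  rw [pairSum_eq_of_mem_coset hx hB0 hBneι, pairSum,
    coord_zhat_add_eWord_of_two_le_hammingNorm _ _ hB hBneι,
    coord_zhat_add_eWord_of_two_le_hammingNorm _ _ hBι (mt add_eq_right.mp hB0), add_zero]

lemma coset_subset_hammingCode (ι : Idx m) :
    coset (Rcomp ι) (zhat ι + eWord ι) ⊆ hammingCode m := by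
  rintro _ ⟨c, hc, rfl⟩
  rw [mem_hammingCode_iff, map_add, map_add, mem_hammingCode_iff.mp hc.1, syndrome_zhat,
    syndrome_eWord, add_self, add_zero]

lemma zero_notMem_coset {ι : Idx m} (hι : 3 ≤ hammingNorm (ι : Fm m)) :
    0 ∉ coset (Rcomp ι) (zhat ι + eWord ι) := fun h0 => by
  obtain ⟨j, hj⟩ := Function.ne_iff.mp ι.2
  have := pairSum_single_of_mem_coset hι h0 j
  simp only [pairSum, coord_zero, add_zero] at this
  exact hj this.symm

lemma disjoint_cosets {ι κ : Idx m} (hι : 3 ≤ hammingNorm (ι : Fm m))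
    (hκ : 3 ≤ hammingNorm (κ : Fm m)) (hικ : 3 ≤ hammingNorm ((ι : Fm m) + (κ : Fm m))) :
    Disjoint (coset (Rcomp ι) (zhat ι + eWord ι)) (coset (Rcomp κ) (zhat κ + eWord κ)) := by
  rw [Set.disjoint_left]
  intro x hxι hxκ
  have hικ0 : (ι : Fm m) + (κ : Fm m) ≠ 0 := hammingNorm_pos_iff.mp (by omega)
  obtain ⟨j, hj⟩ := Function.ne_iff.mp hικ0
  have e₁ := pairSum_single_of_mem_coset hι hxι j
  have e₂ := pairSum_single_add_of_mem_coset hxι hκ (by rwa [add_comm]) j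
  have e₃ := pairSum_single_of_mem_coset hκ hxκ j
  have e₄ := pairSum_single_add_of_mem_coset hxκ hι hικ j
  simp only [pairSum, add_right_comm _ (ι : Fm m)] at e₁ e₂ e₃ e₄
  apply hj
  simp only [Pi.add_apply, Pi.zero_apply]
  linear_combination (norm := (ring_nf; reduce_mod_char)) e₁ + e₂ + e₃ + e₄

theorem stmt11_general (m : ℕ) (C : Set (Fm m)) (hC : IsOneCode C)
    (h0 : (0 : Fm m) ∈ C) :
    (∀ ι κ : Idx m, (ι : Fm m) ∈ C → (κ : Fm m) ∈ C → ι ≠ κ →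
        Disjoint (coset (Rcomp ι) (zhat (ι : Fm m) + eWord ι))
          (coset (Rcomp κ) (zhat (κ : Fm m) + eWord κ))) ∧
      (∀ ι : Idx m, (ι : Fm m) ∈ C →
        coset (Rcomp ι) (zhat (ι : Fm m) + eWord ι) ⊆ hammingCode m) ∧
      (∀ ι : Idx m, (ι : Fm m) ∈ C →
        (0 : Fn m) ∉ coset (Rcomp ι) (zhat (ι : Fm m) + eWord ι)) := by
  have hweight : ∀ ι : Idx m, (ι : Fm m) ∈ C → 3 ≤ hammingNorm (ι : Fm m) := fun ι hι => by
    simpa using hC.three_le_hammingNorm_add h0 hι ι.2.symm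
  refine ⟨fun ι κ hι hκ hικ => ?_, fun ι _ => coset_subset_hammingCode ι,
    fun ι hι => zero_notMem_coset (hweight ι hι)⟩
  exact disjoint_cosets (hweight ι hι) (hweight κ hκ)
    (hC.three_le_hammingNorm_add hι hκ (Subtype.coe_injective.ne hικ))

/-- If `C ⊆ F^m` is a 1-code with `0 ∈ C`, then the cosets
`R_ι + ẑι + e^(ι)`, for `ι ∈ Ċ = C \ {0}`, are pairwise disjoint subsets of `H`,
and none of them contains `0^n`. -/
theorem stmt11 (m : ℕ) (hm : 1 ≤ m) (C : Set (Fm m)) (hC : IsOneCode C)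
    (h0 : (0 : Fm m) ∈ C) :
    (∀ ι κ : Idx m, (ι : Fm m) ∈ C → (κ : Fm m) ∈ C → ι ≠ κ →
        Disjoint (coset (Rcomp ι) (zhat (ι : Fm m) + eWord ι))
          (coset (Rcomp κ) (zhat (κ : Fm m) + eWord κ))) ∧
      (∀ ι : Idx m, (ι : Fm m) ∈ C →
        coset (Rcomp ι) (zhat (ι : Fm m) + eWord ι) ⊆ hammingCode m) ∧
      (∀ ι : Idx m, (ι : Fm m) ∈ C →
        (0 : Fn m) ∉ coset (Rcomp ι) (zhat (ι : Fm m) + eWord ι)) :=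
  stmt11_general m C hC h0
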